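/- arXiv:2010.11171 — 2 statements merged into one kernel-verified Lean document; each statement's English description precedes it below -/
import Mathlib

section
/- Let X_{t+1} = X_t(Id − E[A_t]) + B_t be a one-sided decay recursion with ‖A_t‖₂ ≤ 2 a.s. Suppose for some constants X̄ ≥ 0, C > 0 and exponents 0 < α < 1 < β: log ‖(∏_{r=s}^t (Id − E[A_r])) Q‖₂ < X̄ − C ∫_s^{t+1} r^{−α} dr for all s ≤ t, and ‖B_t‖_F = O(t^{−β}). Then ‖X_t Q‖_F = O(t^{α−β}). -/
/-!
Unrolling the recursion gives `X (t+1) Q = X 0 P(0,t) Q + ∑_{s ≤ t} B s P(s+1,t) Q`, where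
`P(s,t) = ∏_{r=s}^t (Id - E[A r])`. Since `∫_s^{t+1} r^(-α) dr ≥ (t+1-s) (t+1)^(-α)`, the hypothesis on
the logarithm gives `‖P(s,t) Q‖₂ ≤ K q^(t+1-s)` with `q = exp (-C (t+1)^(-α))` and
`K = max (exp X̄) ‖Q‖₂` (the empty product `P(t+1,t)` leaves `Q` alone), so `‖X (t+1) Q‖_F` is at
most a multiple of `∑_{s ≤ t} s^(-β) q^(t-s)`. In that sum the terms with `2s ≤ t` add up to at
most `(t+1) exp (-(C/2) (t+1)^(1-α))`, which decays faster than any power of `t`, while each other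
term has `s^(-β) ≤ 2^β (t+1)^(-β)` and the geometric series `∑ q^k` is at most `e^C (t+1)^α / C`.
-/

open MeasureTheory ProbabilityTheory Matrix Filter Asymptotics

noncomputable def frobNorm {m n : ℕ} (A : Matrix (Fin m) (Fin n) ℝ) : ℝ :=
  Real.sqrt (∑ i, ∑ j, (A i j) ^ 2)

noncomputable def specNorm {m n : ℕ} (A : Matrix (Fin m) (Fin n) ℝ) : ℝ :=
  ‖(LinearMap.toContinuousLinearMap
    (Matrix.toEuclideanLin A : EuclideanSpace ℝ (Fin n) →ₗ[ℝ] EuclideanSpace ℝ (Fin m)))‖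

/-- Entrywise expectation of a random matrix. -/
noncomputable def mExp {Ω : Type*} [MeasureSpace Ω] {m n : ℕ}
    (M : Ω → Matrix (Fin m) (Fin n) ℝ) : Matrix (Fin m) (Fin n) ℝ :=
  Matrix.of fun i j => ∫ ω, M ω i j

/-- The ordered product `M t * M (t+1) * ⋯ * M T`. -/
noncomputable def ordProd {n : ℕ} (M : ℕ → Matrix (Fin n) (Fin n) ℝ) (t T : ℕ) :
    Matrix (Fin n) (Fin n) ℝ :=
  ((List.range (T + 1 - t)).map (fun k => M (t + k))).prod

open Real Finset

open scoped Matrix.Norms.L2Operator in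
theorem specNorm_eq_l2_opNorm {m n : ℕ} (A : Matrix (Fin m) (Fin n) ℝ) : specNorm A = ‖A‖ := rfl

theorem specNorm_nonneg {m n : ℕ} (A : Matrix (Fin m) (Fin n) ℝ) : 0 ≤ specNorm A :=
  norm_nonneg _

theorem specNorm_transpose {m n : ℕ} (A : Matrix (Fin m) (Fin n) ℝ) : specNorm Aᵀ = specNorm A := by
  simpa [specNorm_eq_l2_opNorm] using Matrix.l2_opNorm_conjTranspose A

theorem sum_sq_mul_apply_le {p m n : ℕ} (A : Matrix (Fin p) (Fin m) ℝ) (B : Matrix (Fin m) (Fin n) ℝ)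
    (i : Fin p) : ∑ j, (A * B) i j ^ 2 ≤ specNorm B ^ 2 * ∑ k, A i k ^ 2 := by
  have h := Matrix.l2_opNorm_mulVec Bᵀ (WithLp.toLp 2 (A i))
  rw [← specNorm_eq_l2_opNorm, specNorm_transpose] at h
  have h2 := pow_le_pow_left₀ (norm_nonneg _) h 2
  simpa [mul_pow, EuclideanSpace.norm_sq_eq, Matrix.mul_apply, Matrix.mulVec, dotProduct, mul_comm]
    using h2

theorem frobNorm_mul_le {p m n : ℕ} (A : Matrix (Fin p) (Fin m) ℝ) (B : Matrix (Fin m) (Fin n) ℝ) :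
    frobNorm (A * B) ≤ frobNorm A * specNorm B := by
  calc frobNorm (A * B) ≤ √(specNorm B ^ 2 * ∑ i, ∑ k, A i k ^ 2) := by
        rw [mul_sum]
        exact sqrt_le_sqrt (sum_le_sum fun i _ => sum_sq_mul_apply_le A B i)
    _ = frobNorm A * specNorm B := by
        rw [sqrt_mul (sq_nonneg _), sqrt_sq (specNorm_nonneg B), frobNorm, mul_comm]

theorem frobNorm_nonneg {m n : ℕ} (A : Matrix (Fin m) (Fin n) ℝ) : 0 ≤ frobNorm A :=
  sqrt_nonneg _

section Frobenius

attribute [local instance] Matrix.frobeniusSeminormedAddCommGroup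

theorem frobNorm_eq_norm {m n : ℕ} (A : Matrix (Fin m) (Fin n) ℝ) : frobNorm A = ‖A‖ := by
  rw [Matrix.frobenius_norm_def, frobNorm, sqrt_eq_rpow]
  simp only [Real.norm_eq_abs, rpow_two, sq_abs]

theorem frobNorm_add_le {m n : ℕ} (A B : Matrix (Fin m) (Fin n) ℝ) :
    frobNorm (A + B) ≤ frobNorm A + frobNorm B := by
  simpa only [frobNorm_eq_norm] using norm_add_le A B

theorem frobNorm_sum_le {m n : ℕ} {ι : Type*} (s : Finset ι) (A : ι → Matrix (Fin m) (Fin n) ℝ) :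
    frobNorm (∑ i ∈ s, A i) ≤ ∑ i ∈ s, frobNorm (A i) := by
  simpa only [frobNorm_eq_norm] using norm_sum_le s A

end Frobenius

theorem ordProd_succ_self {n : ℕ} (M : ℕ → Matrix (Fin n) (Fin n) ℝ) (t : ℕ) :
    ordProd M (t + 1) t = 1 := by
  simp [ordProd]

theorem ordProd_succ_right {n : ℕ} (M : ℕ → Matrix (Fin n) (Fin n) ℝ) {s t : ℕ} (h : s ≤ t + 1) :
    ordProd M s (t + 1) = ordProd M s t * M (t + 1) := by
  rw [ordProd, ordProd, show t + 1 + 1 - s = t + 1 - s + 1 by omega, List.range_succ,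
    List.map_append, List.prod_append]
  simp [show s + (t + 1 - s) = t + 1 by omega]

theorem eq_mul_ordProd_add_sum_of_recursion {p n : ℕ} (M : ℕ → Matrix (Fin n) (Fin n) ℝ)
    (B X : ℕ → Matrix (Fin p) (Fin n) ℝ) (hrec : ∀ t, X (t + 1) = X t * M t + B t) (t : ℕ) :
    X (t + 1) = X 0 * ordProd M 0 t + ∑ s ∈ range (t + 1), B s * ordProd M (s + 1) t := by
  induction t with
  | zero => simp [hrec 0, ordProd]
  | succ t ih =>
    rw [hrec (t + 1), ih, sum_range_succ (fun s => B s * ordProd M (s + 1) (t + 1)),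
      ordProd_succ_self, Matrix.mul_one, Matrix.add_mul, Matrix.sum_mul, Matrix.mul_assoc,
      ← ordProd_succ_right M (Nat.zero_le _), add_assoc]
    congr 2
    refine sum_congr rfl fun s hs => ?_
    rw [Matrix.mul_assoc, ← ordProd_succ_right M (by simp at hs; omega)]

theorem frobNorm_mul_le_of_recursion {p n : ℕ} (M : ℕ → Matrix (Fin n) (Fin n) ℝ)
    (B X : ℕ → Matrix (Fin p) (Fin n) ℝ) (Q : Matrix (Fin n) (Fin n) ℝ)
    (hrec : ∀ t, X (t + 1) = X t * M t + B t) (t : ℕ) :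
    frobNorm (X (t + 1) * Q) ≤ frobNorm (X 0) * specNorm (ordProd M 0 t * Q)
      + ∑ s ∈ range (t + 1), frobNorm (B s) * specNorm (ordProd M (s + 1) t * Q) := by
  rw [eq_mul_ordProd_add_sum_of_recursion M B X hrec t, Matrix.add_mul, Matrix.sum_mul]
  simp only [Matrix.mul_assoc]
  calc _ ≤ frobNorm (X 0 * (ordProd M 0 t * Q))
        + ∑ s ∈ range (t + 1), frobNorm (B s * (ordProd M (s + 1) t * Q)) :=
        (frobNorm_add_le _ _).trans (by gcongr; exact frobNorm_sum_le _ _)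
    _ ≤ _ := add_le_add (frobNorm_mul_le _ _) (sum_le_sum fun s _ => frobNorm_mul_le _ _)

theorem frobNorm_mul_le_mul_sum_of_recursion {p n : ℕ} (M : ℕ → Matrix (Fin n) (Fin n) ℝ)
    (B X : ℕ → Matrix (Fin p) (Fin n) ℝ) (Q : Matrix (Fin n) (Fin n) ℝ)
    (hrec : ∀ t, X (t + 1) = X t * M t + B t) {K c q : ℝ} {w : ℕ → ℝ} {t : ℕ}
    (hq0 : 0 ≤ q) (hq1 : q ≤ 1) (hw : ∀ s, 0 ≤ w s) (hw0 : 1 ≤ w 0)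
    (hB : ∀ s, frobNorm (B s) ≤ c * w s)
    (hP : ∀ s ≤ t + 1, specNorm (ordProd M s t * Q) ≤ K * q ^ (t + 1 - s)) :
    frobNorm (X (t + 1) * Q) ≤ K * (frobNorm (X 0) + c) * ∑ s ∈ range (t + 1), w s * q ^ (t - s) := by
  have hK : 0 ≤ K := by simpa using (specNorm_nonneg _).trans (hP (t + 1) le_rfl)
  have hX0 : 0 ≤ frobNorm (X 0) := frobNorm_nonneg _
  have hlead : q ^ (t + 1) ≤ ∑ s ∈ range (t + 1), w s * q ^ (t - s) := calc
    q ^ (t + 1) ≤ q ^ t := pow_le_pow_of_le_one hq0 hq1 t.le_succ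
    _ ≤ w 0 * q ^ (t - 0) := by simpa using le_mul_of_one_le_left (pow_nonneg hq0 t) hw0
    _ ≤ _ := single_le_sum (fun s _ => mul_nonneg (hw s) (pow_nonneg hq0 _)) (mem_range.2 t.succ_pos)
  calc frobNorm (X (t + 1) * Q)
      ≤ frobNorm (X 0) * specNorm (ordProd M 0 t * Q)
        + ∑ s ∈ range (t + 1), frobNorm (B s) * specNorm (ordProd M (s + 1) t * Q) :=
        frobNorm_mul_le_of_recursion M B X Q hrec t
    _ ≤ frobNorm (X 0) * (K * q ^ (t + 1))
        + ∑ s ∈ range (t + 1), c * w s * (K * q ^ (t - s)) := by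
        refine add_le_add (mul_le_mul_of_nonneg_left (hP 0 (Nat.zero_le _)) hX0)
          (sum_le_sum fun s hs => mul_le_mul (hB s) ?_ (specNorm_nonneg _)
            ((frobNorm_nonneg _).trans (hB s)))
        simpa using hP (s + 1) (by simp at hs; omega)
    _ = K * (frobNorm (X 0) * q ^ (t + 1) + c * ∑ s ∈ range (t + 1), w s * q ^ (t - s)) := by
        rw [mul_sum, mul_add, mul_sum]
        congr 1
        · ring
        · exact sum_congr rfl fun _ _ => by ring
    _ ≤ K * (frobNorm (X 0) + c) * ∑ s ∈ range (t + 1), w s * q ^ (t - s) := by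
        rw [mul_assoc, add_mul]; gcongr

theorem mul_rpow_neg_le_integral_rpow_neg {a b α : ℝ} (ha : 0 ≤ a) (hab : a ≤ b) (hα0 : 0 ≤ α)
    (hα1 : α < 1) : (b - a) * b ^ (-α) ≤ ∫ r in a..b, r ^ (-α) := by
  calc (b - a) * b ^ (-α) = ∫ _ in a..b, b ^ (-α) := by simp
    _ ≤ ∫ r in a..b, r ^ (-α) :=
      intervalIntegral.integral_mono_on_of_le_Ioo hab intervalIntegrable_const
        (intervalIntegral.intervalIntegrable_rpow' (by linarith))
        fun r hr => rpow_le_rpow_of_nonpos (ha.trans_lt hr.1) hr.2.le (by linarith)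

theorem specNorm_ordProd_mul_le {n : ℕ} (M : ℕ → Matrix (Fin n) (Fin n) ℝ)
    (Q : Matrix (Fin n) (Fin n) ℝ) {Xbar C α : ℝ} (hC : 0 ≤ C) (hα0 : 0 ≤ α) (hα1 : α < 1)
    (hlog : ∀ s t : ℕ, s ≤ t → log (specNorm (ordProd M s t * Q)) <
      Xbar - C * ∫ r in (s : ℝ)..((t : ℝ) + 1), r ^ (-α))
    {s t : ℕ} (hst : s ≤ t + 1) :
    specNorm (ordProd M s t * Q)
      ≤ max (exp Xbar) (specNorm Q) * exp (-C * ((t : ℝ) + 1) ^ (-α)) ^ (t + 1 - s) := by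
  rcases hst.eq_or_lt with rfl | hst
  · simp [ordProd_succ_self]
  have hint := mul_rpow_neg_le_integral_rpow_neg (Nat.cast_nonneg s)
    (by exact_mod_cast hst.le : (s : ℝ) ≤ (t : ℝ) + 1) hα0 hα1
  calc specNorm (ordProd M s t * Q)
      ≤ exp (Xbar - C * ∫ r in (s : ℝ)..((t : ℝ) + 1), r ^ (-α)) :=
        le_exp_of_log_le (hlog s t (by omega)).le
    _ ≤ exp Xbar * exp (-C * ((t : ℝ) + 1) ^ (-α)) ^ (t + 1 - s) := by
        rw [← exp_nat_mul, ← exp_add, exp_le_exp, Nat.cast_sub hst.le]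
        push_cast
        nlinarith
    _ ≤ _ := by gcongr; exact le_max_left _ _

theorem inv_one_sub_exp_neg_le {x : ℝ} (hx : 0 < x) : (1 - exp (-x))⁻¹ ≤ exp x / x := by
  have h : x ≤ exp x - 1 := by linarith [add_one_le_exp x]
  rw [exp_neg, show 1 - (exp x)⁻¹ = (exp x - 1) / exp x by field_simp, inv_div]
  gcongr

theorem sum_range_exp_neg_mul_rpow_pow_le {C α : ℝ} (hC : 0 < C) (hα : 0 ≤ α) (t : ℕ) :
    ∑ s ∈ range (t + 1), exp (-C * ((t : ℝ) + 1) ^ (-α)) ^ (t - s)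
      ≤ exp C / C * ((t : ℝ) + 1) ^ α := by
  set T : ℝ := (t : ℝ) + 1
  have hT : 1 ≤ T := by simp [T]
  have hx : 0 < C * T ^ (-α) := by positivity
  have hTα : T ^ (-α) ≤ 1 := rpow_le_one_of_one_le_of_nonpos hT (by linarith)
  calc ∑ s ∈ range (t + 1), exp (-C * T ^ (-α)) ^ (t - s)
      = ∑ k ∈ range (t + 1), exp (-C * T ^ (-α)) ^ k := by
        simpa using sum_range_reflect (fun k => exp (-C * T ^ (-α)) ^ k) (t + 1)
    _ ≤ (1 - exp (-C * T ^ (-α)))⁻¹ := by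
        have h := geom_sum_Ico_le_of_lt_one (m := 0) (n := t + 1) (exp_pos (-(C * T ^ (-α)))).le
          (exp_lt_one_iff.2 (by linarith))
        rwa [← range_eq_Ico, pow_zero, one_div, ← neg_mul] at h
    _ ≤ exp (C * T ^ (-α)) / (C * T ^ (-α)) := by rw [neg_mul]; exact inv_one_sub_exp_neg_le hx
    _ ≤ exp C / (C * T ^ (-α)) := by gcongr; nlinarith
    _ = exp C / C * T ^ α := by rw [rpow_neg (by positivity)]; field_simp

theorem max_one_rpow_neg_le_of_lt_two_mul {β : ℝ} (hβ : 0 ≤ β) {s t : ℕ} (hts : t < 2 * s) :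
    max 1 (s : ℝ) ^ (-β) ≤ 2 ^ β * ((t : ℝ) + 1) ^ (-β) := by
  have hT : ((t : ℝ) + 1) / 2 ≤ s := by
    rw [div_le_iff₀ two_pos]; exact_mod_cast (show t + 1 ≤ s * 2 by omega)
  calc max 1 (s : ℝ) ^ (-β) ≤ (((t : ℝ) + 1) / 2) ^ (-β) :=
        rpow_le_rpow_of_nonpos (by positivity) (hT.trans (le_max_right _ _)) (by linarith)
    _ = 2 ^ β * ((t : ℝ) + 1) ^ (-β) := by
        rw [div_eq_inv_mul, mul_rpow (by norm_num) (by positivity), inv_rpow zero_le_two,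
          rpow_neg zero_le_two, inv_inv]

theorem exp_neg_mul_rpow_pow_le {C α : ℝ} (hC : 0 ≤ C) (hα : 0 ≤ α) {s t : ℕ} (hst : 2 * s ≤ t) :
    exp (-C * ((t : ℝ) + 1) ^ (-α)) ^ (t - s)
      ≤ exp (C / 2) * exp (-(C / 2) * ((t : ℝ) + 1) ^ (1 - α)) := by
  set T : ℝ := (t : ℝ) + 1
  have hT : 1 ≤ T := by simp [T]
  have hTα : T ^ (-α) ≤ 1 := rpow_le_one_of_one_le_of_nonpos hT (by linarith)
  have hts : (T - 1) / 2 ≤ ((t - s : ℕ) : ℝ) := by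
    rw [Nat.cast_sub (by omega)]
    have : (2 * s : ℝ) ≤ t := by exact_mod_cast hst
    simp only [T]; linarith
  rw [← exp_nat_mul, ← exp_add, exp_le_exp,
    show (1 - α) = 1 + -α by ring, rpow_add (by positivity), rpow_one]
  have : 0 ≤ C * T ^ (-α) := by positivity
  nlinarith

theorem sum_filter_lt_two_mul_le {C α β : ℝ} (hC : 0 < C) (hα : 0 ≤ α) (hβ : 0 ≤ β) (t : ℕ) :
    ∑ s ∈ (range (t + 1)).filter (t < 2 * ·),
        max 1 (s : ℝ) ^ (-β) * exp (-C * ((t : ℝ) + 1) ^ (-α)) ^ (t - s)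
      ≤ 2 ^ β * (exp C / C) * ((t : ℝ) + 1) ^ (α - β) := by
  set T : ℝ := (t : ℝ) + 1
  set q : ℝ := exp (-C * T ^ (-α))
  calc ∑ s ∈ (range (t + 1)).filter (t < 2 * ·), max 1 (s : ℝ) ^ (-β) * q ^ (t - s)
      ≤ ∑ s ∈ (range (t + 1)).filter (t < 2 * ·), 2 ^ β * T ^ (-β) * q ^ (t - s) :=
        sum_le_sum fun s hs => mul_le_mul_of_nonneg_right
          (max_one_rpow_neg_le_of_lt_two_mul hβ (mem_filter.1 hs).2) (by positivity)
    _ ≤ ∑ s ∈ range (t + 1), 2 ^ β * T ^ (-β) * q ^ (t - s) :=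
        sum_le_sum_of_subset_of_nonneg (filter_subset _ _) fun _ _ _ => by positivity
    _ = 2 ^ β * T ^ (-β) * ∑ s ∈ range (t + 1), q ^ (t - s) := (mul_sum ..).symm
    _ ≤ 2 ^ β * T ^ (-β) * (exp C / C * T ^ α) := by
        gcongr; exact sum_range_exp_neg_mul_rpow_pow_le hC hα t
    _ = 2 ^ β * (exp C / C) * T ^ (α - β) := by
        rw [sub_eq_add_neg α β, rpow_add (by positivity)]; ring

theorem sum_filter_not_lt_two_mul_le {C α β : ℝ} (hC : 0 ≤ C) (hα : 0 ≤ α) (hβ : 0 ≤ β) (t : ℕ) :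
    ∑ s ∈ (range (t + 1)).filter (¬ t < 2 * ·),
        max 1 (s : ℝ) ^ (-β) * exp (-C * ((t : ℝ) + 1) ^ (-α)) ^ (t - s)
      ≤ exp (C / 2) * (((t : ℝ) + 1) * exp (-(C / 2) * ((t : ℝ) + 1) ^ (1 - α))) := by
  have hterm : ∀ s ∈ (range (t + 1)).filter (¬ t < 2 * ·),
      max 1 (s : ℝ) ^ (-β) * exp (-C * ((t : ℝ) + 1) ^ (-α)) ^ (t - s)
        ≤ exp (C / 2) * exp (-(C / 2) * ((t : ℝ) + 1) ^ (1 - α)) := fun s hs => by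
    have hw : max 1 (s : ℝ) ^ (-β) ≤ 1 :=
      rpow_le_one_of_one_le_of_nonpos (le_max_left _ _) (by linarith)
    calc _ ≤ 1 * exp (-C * ((t : ℝ) + 1) ^ (-α)) ^ (t - s) := by gcongr
      _ ≤ _ := by rw [one_mul]; exact exp_neg_mul_rpow_pow_le hC hα (by simp at hs; omega)
  calc _ ≤ #((range (t + 1)).filter (¬ t < 2 * ·)) •
          (exp (C / 2) * exp (-(C / 2) * ((t : ℝ) + 1) ^ (1 - α))) := sum_le_card_nsmul _ _ _ hterm
    _ ≤ #(range (t + 1)) • (exp (C / 2) * exp (-(C / 2) * ((t : ℝ) + 1) ^ (1 - α))) := by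
        gcongr; exact filter_subset _ _
    _ = _ := by rw [card_range, nsmul_eq_mul]; push_cast; ring

theorem isLittleO_exp_neg_mul_rpow_rpow_atTop {a γ : ℝ} (ha : 0 < a) (hγ : 0 < γ) (m : ℝ) :
    (fun x : ℝ => exp (-a * x ^ γ)) =o[atTop] fun x => x ^ m := by
  refine ((isLittleO_exp_neg_mul_rpow_atTop ha (m / γ)).comp_tendsto
    (tendsto_rpow_atTop hγ)).congr' EventuallyEq.rfl ?_
  filter_upwards [eventually_ge_atTop 0] with x hx
  simp only [Function.comp_apply]
  rw [← rpow_mul hx, mul_div_cancel₀ _ hγ.ne']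

theorem isBigO_mul_exp_neg_mul_rpow_atTop {a γ : ℝ} (ha : 0 < a) (hγ : 0 < γ) (m : ℝ) :
    (fun x : ℝ => x * exp (-a * x ^ γ)) =O[atTop] fun x => x ^ m := by
  refine ((isBigO_refl (fun x : ℝ => x) atTop).mul
    (isLittleO_exp_neg_mul_rpow_rpow_atTop ha hγ (m - 1)).isBigO).congr' EventuallyEq.rfl ?_
  filter_upwards [eventually_gt_atTop 0] with x hx
  rw [rpow_sub hx, rpow_one, mul_div_cancel₀ _ hx.ne']

theorem isBigO_sum_max_one_rpow_mul_exp_pow {C α β : ℝ} (hC : 0 < C) (hα0 : 0 ≤ α)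
    (hα1 : α < 1) (hβ : 0 ≤ β) :
    (fun t : ℕ => ∑ s ∈ range (t + 1),
        max 1 (s : ℝ) ^ (-β) * exp (-C * ((t : ℝ) + 1) ^ (-α)) ^ (t - s))
      =O[atTop] fun t : ℕ => ((t : ℝ) + 1) ^ (α - β) := by
  have hT : Tendsto (fun t : ℕ => (t : ℝ) + 1) atTop atTop :=
    tendsto_atTop_add_const_right _ 1 tendsto_natCast_atTop_atTop
  have hhead := ((isBigO_mul_exp_neg_mul_rpow_atTop (half_pos hC) (sub_pos.2 hα1)
    (α - β)).const_mul_left (exp (C / 2))).comp_tendsto hT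
  have htail := isBigO_const_mul_self (2 ^ β * (exp C / C))
    (fun t : ℕ => ((t : ℝ) + 1) ^ (α - β)) atTop
  refine IsBigO.trans (isBigO_of_le _ fun t => ?_) (hhead.add htail)
  rw [← sum_filter_add_sum_filter_not _ (t < 2 * ·), add_comm]
  simp only [Function.comp_apply, norm_eq_abs]
  rw [abs_of_nonneg (by positivity)]
  exact (add_le_add (sum_filter_not_lt_two_mul_le hC.le hα0 hβ t)
    (sum_filter_lt_two_mul_le hC hα0 hβ t)).trans (le_abs_self _)

-- `max 1 t` rather than `t`, since `(0 : ℝ) ^ (-β) = 0` would bound nothing at `t = 0`.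
theorem exists_le_mul_max_one_rpow_neg {f : ℕ → ℝ} {β : ℝ}
    (hf : f =O[atTop] fun t : ℕ => (t : ℝ) ^ (-β)) :
    ∃ c, ∀ t, f t ≤ c * max 1 (t : ℝ) ^ (-β) := by
  have h : f =O[atTop] fun t : ℕ => max 1 (t : ℝ) ^ (-β) := hf.congr' EventuallyEq.rfl <| by
    filter_upwards [eventually_ge_atTop 1] with t ht
    rw [max_eq_right (by exact_mod_cast ht)]
  obtain ⟨c, hc⟩ := (isBigO_nat_atTop_iff fun t ht =>
    absurd ht (rpow_pos_of_pos (by positivity) _).ne').1 h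
  refine ⟨c, fun t => (le_abs_self _).trans ?_⟩
  simpa only [norm_eq_abs, abs_of_pos (rpow_pos_of_pos (by positivity : (0 : ℝ) < max 1 (t : ℝ)) (-β))]
    using hc t

theorem isBigO_rpow_of_isBigO_comp_succ {E : Type*} [Norm E] {f : ℕ → E} {e : ℝ}
    (h : (fun t : ℕ => f (t + 1)) =O[atTop] fun t : ℕ => ((t : ℝ) + 1) ^ e) :
    f =O[atTop] fun t : ℕ => (t : ℝ) ^ e := by
  refine (h.comp_tendsto (tendsto_sub_atTop_nat 1)).congr' ?_ ?_ <;>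
    filter_upwards [eventually_ge_atTop 1] with t ht
  · simp [Nat.sub_add_cancel ht]
  · simp [Nat.cast_sub ht]

theorem stmt_10_general {Ω : Type*} [MeasureSpace Ω]
    {n p : ℕ} (A : ℕ → Ω → Matrix (Fin n) (Fin n) ℝ)
    (B : ℕ → Matrix (Fin p) (Fin n) ℝ)
    (Q : Matrix (Fin n) (Fin n) ℝ)
    (X : ℕ → Matrix (Fin p) (Fin n) ℝ)
    (hrec : ∀ t, X (t + 1) = X t * (1 - mExp (A t)) + B t)
    (Xbar C α β : ℝ) (hC : 0 < C)
    (hα0 : 0 < α) (hα1 : α < 1) (hβ : 1 < β)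
    (hlog : ∀ s t : ℕ, s ≤ t →
      Real.log (specNorm (ordProd (fun r => 1 - mExp (A r)) s t * Q)) <
        Xbar - C * ∫ r in (s : ℝ)..((t : ℝ) + 1), r ^ (-α))
    (hBrate : (fun t : ℕ => frobNorm (B t)) =O[atTop] (fun t : ℕ => (t : ℝ) ^ (-β))) :
    (fun t : ℕ => frobNorm (X t * Q)) =O[atTop] (fun t : ℕ => (t : ℝ) ^ (α - β)) := by
  obtain ⟨c, hB⟩ := exists_le_mul_max_one_rpow_neg hBrate
  have hstep : ∀ t, frobNorm (X (t + 1) * Q) ≤ max (exp Xbar) (specNorm Q) * (frobNorm (X 0) + c)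
      * ∑ s ∈ range (t + 1), max 1 (s : ℝ) ^ (-β) * exp (-C * ((t : ℝ) + 1) ^ (-α)) ^ (t - s) :=
    fun t => frobNorm_mul_le_mul_sum_of_recursion _ B X Q hrec (exp_pos _).le
      (exp_le_one_iff.2 (mul_nonpos_of_nonpos_of_nonneg (neg_nonpos.2 hC.le) (by positivity)))
      (fun s => by positivity) (by simp) hB
      (fun s hs => specNorm_ordProd_mul_le _ Q hC.le hα0.le hα1 hlog hs)
  have hsucc : (fun t : ℕ => frobNorm (X (t + 1) * Q))
      =O[atTop] fun t : ℕ => ((t : ℝ) + 1) ^ (α - β) :=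
    (isBigO_of_le _ fun t => by
      rw [norm_of_nonneg (frobNorm_nonneg _), norm_eq_abs]
      exact (hstep t).trans (le_abs_self _)).trans
      ((isBigO_sum_max_one_rpow_mul_exp_pow hC hα0.le hα1 (by linarith)).const_mul_left _)
  exact isBigO_rpow_of_isBigO_comp_succ hsucc

/-- Quantitative one-sided decay: under the recursion
`X_{t+1} = X_t (Id − E[A_t]) + B_t`, if
`log ‖(∏_{r=s}^t (Id − E[A_r])) Q‖₂ < X̄ − C ∫_s^{t+1} r^{−α} dr` and
`‖B_t‖_F = O(t^{−β})` with `0 < α < 1 < β`, then `‖X_t Q‖_F = O(t^{α−β})`. -/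
theorem stmt_10 {Ω : Type*} [MeasureSpace Ω] [IsProbabilityMeasure (volume : Measure Ω)]
    {n p : ℕ} (A : ℕ → Ω → Matrix (Fin n) (Fin n) ℝ)
    (hpsd : ∀ t, ∀ᵐ ω, (A t ω).PosSemidef)
    (hbdd : ∀ t, ∀ᵐ ω, specNorm (A t ω) ≤ 2)
    (hint : ∀ t i j, Integrable (fun ω => A t ω i j))
    (B : ℕ → Matrix (Fin p) (Fin n) ℝ)
    (Q : Matrix (Fin n) (Fin n) ℝ) (hQsymm : Qᵀ = Q) (hQproj : Q * Q = Q)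
    (X : ℕ → Matrix (Fin p) (Fin n) ℝ)
    (hrec : ∀ t, X (t + 1) = X t * (1 - mExp (A t)) + B t)
    (Xbar C α β : ℝ) (hXbar : 0 ≤ Xbar) (hC : 0 < C)
    (hα0 : 0 < α) (hα1 : α < 1) (hβ : 1 < β)
    (hlog : ∀ s t : ℕ, s ≤ t →
      Real.log (specNorm (ordProd (fun r => 1 - mExp (A r)) s t * Q)) <
        Xbar - C * ∫ r in (s : ℝ)..((t : ℝ) + 1), r ^ (-α))
    (hBrate : (fun t : ℕ => frobNorm (B t)) =O[atTop] (fun t : ℕ => (t : ℝ) ^ (-β))) :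
    (fun t : ℕ => frobNorm (X t * Q)) =O[atTop] (fun t : ℕ => (t : ℝ) ^ (α - β)) :=
  stmt_10_general A B Q X hrec Xbar C α β hC hα0 hα1 hβ hlog hBrate
end

section
/- Under the augmented GD dynamics W_{t+1} = W_t − (2η_t/N)(W_t X_t − Y_t)X_tᵀ with (X_t, Y_t) independent of W_t, the centered second moment Z_t := E[(W_t − E[W_t])ᵀ(W_t − E[W_t])] satisfies Z_{t+1} = E[(Id − (2η_t/N) X_t X_tᵀ) Z_t (Id − (2η_t/N) X_t X_tᵀ)] + (4η_t²/N²)·(Id ∘ Var(E[W_t] X_t X_tᵀ − Y_t X_tᵀ)), where Var(A) := E[Aᵀ ⊗ A] − E[Aᵀ] ⊗ E[A] and B ∘ (C ⊗ D) := C B D, so Tr of the last term equals (4η_t²/N²)E[‖(E[W_t]X_t − Y_t)X_tᵀ − E[(E[W_t]X_t − Y_t)X_tᵀ]‖_F²]. -/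
open MeasureTheory ProbabilityTheory Matrix

instance matMeas {m n : ℕ} : MeasurableSpace (Matrix (Fin m) (Fin n) ℝ) :=
  MeasurableSpace.pi

/-!
Write `c = 2η/N`, `A = X Xᵀ`, `B = Y Xᵀ` and `G = E[W] A - B` for the gradient at the mean. The
centered step is affine in `W` with coefficients that depend on the data only:
`W' - E W' = (W - E W) (1 - c A) - c (G - E G)`, using `E[W A] = E[W] E[A]` by independence.
Averaging first over `W` with the data frozen (Fubini for the product law of the independent
pair), the cross terms vanish because `W - E W` is centered, and what is left is
`(1 - c A) Z (1 - c A) + c² (G - E G)ᵀ (G - E G)`; averaging over the data gives the recursion.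
Both remaining terms are positive semidefinite, so each is integrable, being dominated entrywise by
their integrable sum; the same argument applied to the gradient `W A - B` makes `Gᵀ G` integrable,
which identifies the variance term and its trace `E ‖G - E G‖²_F`.
-/

instance {m n : ℕ} : BorelSpace (Matrix (Fin m) (Fin n) ℝ) :=
  inferInstanceAs (BorelSpace (Fin m → Fin n → ℝ))

instance {m n : ℕ} : SecondCountableTopology (Matrix (Fin m) (Fin n) ℝ) :=
  inferInstanceAs (SecondCountableTopology (Fin m → Fin n → ℝ))

theorem Matrix.PosSemidef.abs_apply_le {n : Type*} [Fintype n] [DecidableEq n]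
    {P : Matrix n n ℝ} (hP : P.PosSemidef) (i j : n) : |P i j| ≤ (P i i + P j j) / 2 := by
  have hquad : ∀ s : ℝ, 0 ≤ P i i + 2 * s * P i j + s ^ 2 * P j j := fun s => by
    have h := hP.dotProduct_mulVec_nonneg (Pi.single i 1 + s • Pi.single j 1)
    have hji : P j i = P i j := by simpa using hP.1.apply i j
    simp only [star_trivial, mulVec_add, mulVec_smul, mulVec_single_one, add_dotProduct,
      dotProduct_add, smul_dotProduct, dotProduct_smul, single_dotProduct, col_apply, hji,
      smul_eq_mul] at h
    linarith
  rw [abs_le]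
  constructor <;> nlinarith [hquad 1, hquad (-1)]

theorem Matrix.posSemidef_transpose_mul_self {m n : Type*} [Fintype m] [Fintype n]
    (A : Matrix m n ℝ) : (Aᵀ * A).PosSemidef := by
  simpa using posSemidef_conjTranspose_mul_self A

section MatrixIntegral

variable {Ω : Type*} [MeasureSpace Ω] {l m n q : ℕ}

def MatrixIntegrable (M : Ω → Matrix (Fin m) (Fin n) ℝ) : Prop :=
  ∀ i j, Integrable fun ω => M ω i j

namespace MatrixIntegrable

variable {M P : Ω → Matrix (Fin m) (Fin n) ℝ}

theorem add (hM : MatrixIntegrable M) (hP : MatrixIntegrable P) :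
    MatrixIntegrable fun ω => M ω + P ω := fun i j => (hM i j).add (hP i j)

theorem sub (hM : MatrixIntegrable M) (hP : MatrixIntegrable P) :
    MatrixIntegrable fun ω => M ω - P ω := fun i j => (hM i j).sub (hP i j)

theorem smul (hM : MatrixIntegrable M) (c : ℝ) : MatrixIntegrable fun ω => c • M ω :=
  fun i j => (hM i j).const_mul c

theorem transpose (hM : MatrixIntegrable M) : MatrixIntegrable fun ω => (M ω)ᵀ :=
  fun i j => hM j i

theorem const [IsFiniteMeasure (volume : Measure Ω)] (C : Matrix (Fin m) (Fin n) ℝ) :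
    MatrixIntegrable fun _ : Ω => C :=
  fun _ _ => integrable_const _

theorem const_mul (hM : MatrixIntegrable M) (C : Matrix (Fin l) (Fin m) ℝ) :
    MatrixIntegrable fun ω => C * M ω :=
  fun i j => by
    simp only [mul_apply]
    exact integrable_finsetSum _ fun k _ => (hM k j).const_mul (C i k)

theorem mul_const (hM : MatrixIntegrable M) (C : Matrix (Fin n) (Fin q) ℝ) :
    MatrixIntegrable fun ω => M ω * C :=
  fun i j => by
    simp only [mul_apply]
    exact integrable_finsetSum _ fun k _ => (hM i k).mul_const (C k j)

theorem aemeasurable (hM : MatrixIntegrable M) : AEMeasurable M :=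
  aemeasurable_pi_lambda _ fun i => aemeasurable_pi_lambda _ fun j => (hM i j).aemeasurable

theorem transpose_mul_self_sub_iff [IsFiniteMeasure (volume : Measure Ω)]
    (hM : MatrixIntegrable M) (C : Matrix (Fin m) (Fin n) ℝ) :
    (MatrixIntegrable fun ω => (M ω - C)ᵀ * (M ω - C)) ↔
      MatrixIntegrable fun ω => (M ω)ᵀ * M ω := by
  have hcross : MatrixIntegrable fun ω => (M ω)ᵀ * C + Cᵀ * M ω - Cᵀ * C :=
    ((hM.transpose.mul_const C).add (hM.const_mul Cᵀ)).sub (const _)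
  have hexpand : ∀ ω, (M ω - C)ᵀ * (M ω - C) =
      (M ω)ᵀ * M ω - ((M ω)ᵀ * C + Cᵀ * M ω - Cᵀ * C) := fun ω => by
    simp only [transpose_sub, Matrix.sub_mul, Matrix.mul_sub]; abel
  simp only [hexpand]
  exact ⟨fun h => by simpa only [sub_add_cancel] using h.add hcross, fun h => h.sub hcross⟩

theorem of_add_posSemidef {P Q : Ω → Matrix (Fin n) (Fin n) ℝ}
    (hP : ∀ ω, (P ω).PosSemidef) (hQ : ∀ ω, (Q ω).PosSemidef) (hPm : AEMeasurable P)
    (hPQ : MatrixIntegrable fun ω => P ω + Q ω) : MatrixIntegrable P := by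
  have hentry : ∀ i j, AEStronglyMeasurable fun ω => P ω i j := fun i j =>
    ((hPm.eval i).eval j).aestronglyMeasurable
  have hdiag : ∀ i, Integrable fun ω => P ω i i := fun i =>
    (hPQ i i).mono' (hentry i i) (ae_of_all _ fun ω => by
      rw [Real.norm_of_nonneg (hP ω).diag_nonneg]
      show P ω i i ≤ P ω i i + Q ω i i
      linarith [(hQ ω).diag_nonneg (i := i)])
  intro i j
  refine (((hdiag i).add (hdiag j)).div_const 2).mono' (hentry i j) (ae_of_all _ fun ω => ?_)
  rw [Real.norm_eq_abs]
  exact (hP ω).abs_apply_le i j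

theorem transpose_mul_self_sub_smul {F : Ω → Matrix (Fin m) (Fin n) ℝ}
    (hMM : MatrixIntegrable fun ω => (M ω)ᵀ * M ω) (hMF : MatrixIntegrable fun ω => (M ω)ᵀ * F ω)
    (hFF : MatrixIntegrable fun ω => (F ω)ᵀ * F ω) (c : ℝ) :
    MatrixIntegrable fun ω => (M ω - c • F ω)ᵀ * (M ω - c • F ω) := by
  have hexpand : ∀ ω, (M ω - c • F ω)ᵀ * (M ω - c • F ω) =
      (M ω)ᵀ * M ω - c • ((M ω)ᵀ * F ω) - c • ((M ω)ᵀ * F ω)ᵀ + c ^ 2 • ((F ω)ᵀ * F ω) :=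
    fun ω => by
      simp only [transpose_sub, transpose_smul, transpose_mul, transpose_transpose,
        Matrix.sub_mul, Matrix.mul_sub, Matrix.smul_mul, Matrix.mul_smul]
      module
  simp only [hexpand]
  exact ((hMM.sub (hMF.smul c)).sub (hMF.transpose.smul c)).add (hFF.smul _)

end MatrixIntegrable

section Expectation

variable {M P : Ω → Matrix (Fin m) (Fin n) ℝ}

theorem mExp_add (hM : MatrixIntegrable M) (hP : MatrixIntegrable P) :
    mExp (fun ω => M ω + P ω) = mExp M + mExp P := by
  ext i j; exact integral_add (hM i j) (hP i j)

theorem mExp_sub (hM : MatrixIntegrable M) (hP : MatrixIntegrable P) :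
    mExp (fun ω => M ω - P ω) = mExp M - mExp P := by
  ext i j; exact integral_sub (hM i j) (hP i j)

theorem mExp_smul (c : ℝ) : mExp (fun ω => c • M ω) = c • mExp M := by
  ext i j; exact integral_const_mul c _

theorem mExp_transpose : mExp (fun ω => (M ω)ᵀ) = (mExp M)ᵀ := rfl

theorem mExp_const [IsProbabilityMeasure (volume : Measure Ω)]
    (C : Matrix (Fin m) (Fin n) ℝ) : mExp (fun _ : Ω => C) = C := by
  ext i j; simp [mExp]

theorem mExp_const_mul (hM : MatrixIntegrable M) (C : Matrix (Fin l) (Fin m) ℝ) :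
    mExp (fun ω => C * M ω) = C * mExp M := by
  ext i j
  simp only [mExp, of_apply, mul_apply]
  rw [integral_finsetSum _ fun k _ => (hM k j).const_mul (C i k)]
  simp_rw [integral_const_mul]

theorem mExp_mul_const (hM : MatrixIntegrable M) (C : Matrix (Fin n) (Fin q) ℝ) :
    mExp (fun ω => M ω * C) = mExp M * C := by
  ext i j
  simp only [mExp, of_apply, mul_apply]
  rw [integral_finsetSum _ fun k _ => (hM i k).mul_const (C k j)]
  simp_rw [integral_mul_const]

theorem mExp_const_mul_mul_const (hM : MatrixIntegrable M) (L : Matrix (Fin l) (Fin m) ℝ)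
    (R : Matrix (Fin n) (Fin q) ℝ) : mExp (fun ω => L * M ω * R) = L * mExp M * R := by
  rw [mExp_mul_const (hM.const_mul L), mExp_const_mul hM]

theorem trace_mExp {P : Ω → Matrix (Fin n) (Fin n) ℝ} (hP : MatrixIntegrable P) :
    (mExp P).trace = ∫ ω, (P ω).trace := by
  simp only [trace, diag, mExp, of_apply]
  exact (integral_finsetSum _ fun i _ => hP i i).symm

theorem dotProduct_mulVec_mExp {P : Ω → Matrix (Fin m) (Fin n) ℝ} (hP : MatrixIntegrable P)
    (x : Fin m → ℝ) (y : Fin n → ℝ) : x ⬝ᵥ mExp P *ᵥ y = ∫ ω, x ⬝ᵥ P ω *ᵥ y := by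
  simp only [dotProduct, mulVec, mExp, of_apply, Finset.mul_sum]
  rw [integral_finsetSum _ fun i _ => integrable_finsetSum _ fun j _ =>
    ((hP i j).mul_const (y j)).const_mul (x i)]
  refine Finset.sum_congr rfl fun i _ => ?_
  rw [integral_finsetSum _ fun j _ => ((hP i j).mul_const (y j)).const_mul (x i)]
  simp_rw [integral_const_mul, integral_mul_const]

theorem posSemidef_mExp {P : Ω → Matrix (Fin n) (Fin n) ℝ} (hP : ∀ ω, (P ω).PosSemidef)
    (hPi : MatrixIntegrable P) : (mExp P).PosSemidef := by
  refine PosSemidef.of_dotProduct_mulVec_nonneg ?_ fun x => ?_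
  · ext i j
    simp only [conjTranspose_apply, star_trivial, mExp, of_apply]
    exact integral_congr_ae (ae_of_all _ fun ω => by simpa using (hP ω).1.apply i j)
  · rw [star_trivial, dotProduct_mulVec_mExp hPi]
    exact integral_nonneg fun ω => by simpa using (hP ω).dotProduct_mulVec_nonneg x

end Expectation

noncomputable def mCov (M : Ω → Matrix (Fin m) (Fin n) ℝ) : Matrix (Fin n) (Fin n) ℝ :=
  mExp fun ω => (M ω - mExp M)ᵀ * (M ω - mExp M)

section Covariance

variable [IsProbabilityMeasure (volume : Measure Ω)] {M : Ω → Matrix (Fin m) (Fin n) ℝ}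

theorem mCov_eq_sub (hM : MatrixIntegrable M) (hMM : MatrixIntegrable fun ω => (M ω)ᵀ * M ω) :
    mCov M = mExp (fun ω => (M ω)ᵀ * M ω) - (mExp M)ᵀ * mExp M := by
  unfold mCov
  set C := mExp M
  have hcross : MatrixIntegrable fun ω => (M ω)ᵀ * C + Cᵀ * M ω :=
    (hM.transpose.mul_const C).add (hM.const_mul Cᵀ)
  have hexpand : ∀ ω, (M ω - C)ᵀ * (M ω - C) =
      (M ω)ᵀ * M ω - ((M ω)ᵀ * C + Cᵀ * M ω) + Cᵀ * C := fun ω => by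
    simp only [transpose_sub, Matrix.sub_mul, Matrix.mul_sub]; abel
  simp only [hexpand]
  rw [mExp_add (hMM.sub hcross) (.const _), mExp_sub hMM hcross,
    mExp_add (hM.transpose.mul_const C) (hM.const_mul Cᵀ), mExp_mul_const hM.transpose,
    mExp_const_mul hM, mExp_transpose, mExp_const]
  abel

theorem posSemidef_mCov (hM : MatrixIntegrable M) (hMM : MatrixIntegrable fun ω => (M ω)ᵀ * M ω) :
    (mCov M).PosSemidef :=
  posSemidef_mExp (fun _ => posSemidef_transpose_mul_self _)
    ((hM.transpose_mul_self_sub_iff _).2 hMM)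

theorem frobNorm_sq (A : Matrix (Fin m) (Fin n) ℝ) : frobNorm A ^ 2 = (Aᵀ * A).trace := by
  rw [frobNorm, Real.sq_sqrt (by positivity)]
  simp only [trace, diag, mul_apply, transpose_apply]
  rw [Finset.sum_comm]
  simp only [sq]

theorem trace_mCov (hM : MatrixIntegrable M) (hMM : MatrixIntegrable fun ω => (M ω)ᵀ * M ω) :
    (mCov M).trace = ∫ ω, frobNorm (M ω - mExp M) ^ 2 := by
  simp only [mCov, frobNorm_sq]
  exact trace_mExp ((hM.transpose_mul_self_sub_iff _).2 hMM)

theorem mExp_centered_affine_sq {D : Ω → Matrix (Fin l) (Fin n) ℝ} (hD : MatrixIntegrable D)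
    (hDD : MatrixIntegrable fun ω => (D ω)ᵀ * D ω) (hD0 : mExp D = 0)
    (K : Matrix (Fin n) (Fin q) ℝ) (g : Matrix (Fin l) (Fin q) ℝ) :
    mExp (fun ω => (D ω * K - g)ᵀ * (D ω * K - g)) =
      Kᵀ * mExp (fun ω => (D ω)ᵀ * D ω) * K + gᵀ * g := by
  have hcross : MatrixIntegrable fun ω => Kᵀ * (D ω)ᵀ * g + gᵀ * D ω * K :=
    ((hD.transpose.const_mul Kᵀ).mul_const g).add ((hD.const_mul gᵀ).mul_const K)
  have hexpand : ∀ ω, (D ω * K - g)ᵀ * (D ω * K - g) =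
      Kᵀ * ((D ω)ᵀ * D ω) * K - (Kᵀ * (D ω)ᵀ * g + gᵀ * D ω * K) + gᵀ * g := fun ω => by
    simp only [transpose_sub, transpose_mul, Matrix.sub_mul, Matrix.mul_sub, Matrix.mul_assoc]
    abel
  simp only [hexpand]
  rw [mExp_add (((hDD.const_mul Kᵀ).mul_const K).sub hcross) (.const _),
    mExp_sub ((hDD.const_mul Kᵀ).mul_const K) hcross,
    mExp_add ((hD.transpose.const_mul Kᵀ).mul_const g) ((hD.const_mul gᵀ).mul_const K),
    mExp_const_mul_mul_const hDD, mExp_const_mul_mul_const hD.transpose,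
    mExp_const_mul_mul_const hD, mExp_transpose, hD0, mExp_const]
  simp

end Covariance

end MatrixIntegral

namespace ProbabilityTheory

variable {Ω : Type*} [MeasureSpace Ω] {n p q : ℕ}

theorem IndepFun.integral_comp_eq_integral_integral {β γ : Type*} [MeasurableSpace β]
    [MeasurableSpace γ] [IsFiniteMeasure (volume : Measure Ω)] {U : Ω → β} {T : Ω → γ}
    (hUT : IndepFun U T volume) (hU : AEMeasurable U) (hT : AEMeasurable T) {φ : β × γ → ℝ}
    (hφ : Measurable φ) (hint : Integrable fun ω => φ (U ω, T ω)) :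
    (Integrable fun ω => ∫ ω', φ (U ω', T ω)) ∧
      ∫ ω, φ (U ω, T ω) = ∫ ω, ∫ ω', φ (U ω', T ω) := by
  have hmap := hUT.map_prod_eq_prod_map_map hU hT
  have hprod : Integrable φ ((volume.map U).prod (volume.map T)) := by
    rw [← hmap]
    exact (integrable_map_measure hφ.aestronglyMeasurable (hU.prodMk hT)).2 hint
  have hinner : ∀ v, ∫ u, φ (u, v) ∂(volume.map U) = ∫ ω', φ (U ω', v) := fun v =>
    integral_map hU (hφ.comp measurable_prodMk_right).aestronglyMeasurable
  have hmeas : AEStronglyMeasurable (fun v => ∫ u, φ (u, v) ∂(volume.map U)) (volume.map T) :=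
    hφ.stronglyMeasurable.integral_prod_left'.aestronglyMeasurable
  simp only [hinner] at hmeas
  refine ⟨(integrable_map_measure hmeas hT).1 ?_, ?_⟩
  · simpa only [hinner] using hprod.integral_prod_right
  · rw [← integral_map (hU.prodMk hT) hφ.aestronglyMeasurable, hmap, integral_prod_symm _ hprod]
    simp only [hinner]
    exact integral_map hT hmeas

theorem IndepFun.mExp_comp {β γ : Type*} [MeasurableSpace β] [MeasurableSpace γ]
    [IsFiniteMeasure (volume : Measure Ω)] {U : Ω → β} {T : Ω → γ} (hUT : IndepFun U T volume)
    (hU : AEMeasurable U) (hT : AEMeasurable T) {Φ : β × γ → Matrix (Fin p) (Fin n) ℝ}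
    (hΦ : Measurable Φ) (hint : MatrixIntegrable fun ω => Φ (U ω, T ω)) :
    (MatrixIntegrable fun ω => mExp fun ω' => Φ (U ω', T ω)) ∧
      mExp (fun ω => Φ (U ω, T ω)) = mExp fun ω => mExp fun ω' => Φ (U ω', T ω) := by
  have hentry : ∀ i j, Measurable fun z => Φ z i j := fun i j =>
    (measurable_pi_apply j).comp ((measurable_pi_apply i).comp hΦ)
  exact ⟨fun i j => (hUT.integral_comp_eq_integral_integral hU hT (hentry i j) (hint i j)).1,
    by ext i j; exact (hUT.integral_comp_eq_integral_integral hU hT (hentry i j) (hint i j)).2⟩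

theorem IndepFun.matrixIntegrable_mul_and_mExp_mul {U : Ω → Matrix (Fin p) (Fin n) ℝ}
    {A : Ω → Matrix (Fin n) (Fin q) ℝ} (hUA : IndepFun U A volume) (hU : MatrixIntegrable U)
    (hA : MatrixIntegrable A) :
    (MatrixIntegrable fun ω => U ω * A ω) ∧ mExp (fun ω => U ω * A ω) = mExp U * mExp A := by
  have hentry : ∀ i k j, IndepFun (fun ω => U ω i k) (fun ω => A ω k j) volume := fun i k j =>
    hUA.comp ((measurable_pi_apply k).comp (measurable_pi_apply i))
      ((measurable_pi_apply j).comp (measurable_pi_apply k))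
  have hint : ∀ i j k, Integrable fun ω => U ω i k * A ω k j := fun i j k =>
    (hentry i k j).integrable_mul (hU i k) (hA k j)
  refine ⟨fun i j => by
    simp only [mul_apply]; exact integrable_finsetSum _ fun k _ => hint i j k, ?_⟩
  ext i j
  simp only [mExp, of_apply, mul_apply]
  rw [integral_finsetSum _ fun k _ => hint i j k]
  exact Finset.sum_congr rfl fun k _ => (hentry i k j).integral_mul_eq_mul_integral
    (hU i k).aestronglyMeasurable (hA k j).aestronglyMeasurable

/-- Conditionally on `T` the cross terms vanish; the two remaining terms are positive
semidefinite, so each is dominated by their integrable sum. -/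
theorem IndepFun.mExp_centered_affine_sq [IsProbabilityMeasure (volume : Measure Ω)]
    {γ : Type*} [MeasurableSpace γ] {U : Ω → Matrix (Fin p) (Fin n) ℝ} {T : Ω → γ}
    (hind : IndepFun U T volume) (hT : AEMeasurable T) (hU : MatrixIntegrable U)
    (hUU : MatrixIntegrable fun ω => (U ω)ᵀ * U ω) {K : γ → Matrix (Fin n) (Fin q) ℝ}
    {g : γ → Matrix (Fin p) (Fin q) ℝ} (hK : Measurable K) (hg : Measurable g)
    (hint : MatrixIntegrable fun ω =>
      ((U ω - mExp U) * K (T ω) - g (T ω))ᵀ * ((U ω - mExp U) * K (T ω) - g (T ω))) :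
    (MatrixIntegrable fun ω => (K (T ω))ᵀ * mCov U * K (T ω)) ∧
      (MatrixIntegrable fun ω => (g (T ω))ᵀ * g (T ω)) ∧
      mExp (fun ω => ((U ω - mExp U) * K (T ω) - g (T ω))ᵀ * ((U ω - mExp U) * K (T ω) - g (T ω))) =
        mExp (fun ω => (K (T ω))ᵀ * mCov U * K (T ω)) + mExp fun ω => (g (T ω))ᵀ * g (T ω) := by
  have hD : MatrixIntegrable fun ω => U ω - mExp U := hU.sub (.const _)
  have hDD : MatrixIntegrable fun ω => (U ω - mExp U)ᵀ * (U ω - mExp U) :=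
    (hU.transpose_mul_self_sub_iff _).2 hUU
  have hD0 : mExp (fun ω => U ω - mExp U) = 0 := by
    rw [mExp_sub hU (.const _), mExp_const, sub_self]
  have hsq : Continuous fun z : Matrix (Fin p) (Fin n) ℝ ×
      (Matrix (Fin n) (Fin q) ℝ × Matrix (Fin p) (Fin q) ℝ) =>
      ((z.1 - mExp U) * z.2.1 - z.2.2)ᵀ * ((z.1 - mExp U) * z.2.1 - z.2.2) := by
    fun_prop
  obtain ⟨hsum, hsplit⟩ := hind.mExp_comp hU.aemeasurable hT
    (hsq.measurable.comp (measurable_fst.prodMk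
      ((hK.comp measurable_snd).prodMk (hg.comp measurable_snd)))) hint
  have hinner : ∀ ω, (mExp fun ω' =>
      ((U ω' - mExp U) * K (T ω) - g (T ω))ᵀ * ((U ω' - mExp U) * K (T ω) - g (T ω))) =
      (K (T ω))ᵀ * mCov U * K (T ω) + (g (T ω))ᵀ * g (T ω) := fun ω =>
    _root_.mExp_centered_affine_sq hD hDD hD0 (K (T ω)) (g (T ω))
  simp only [Function.comp_apply, hinner] at hsum hsplit
  have hKZK : ∀ ω, ((K (T ω))ᵀ * mCov U * K (T ω)).PosSemidef := fun ω => by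
    simpa using (posSemidef_mCov hU hUU).conjTranspose_mul_mul_same (K (T ω))
  have hgg : ∀ ω, ((g (T ω))ᵀ * g (T ω)).PosSemidef := fun ω =>
    posSemidef_transpose_mul_self (g (T ω))
  have hKZKi : MatrixIntegrable fun ω => (K (T ω))ᵀ * mCov U * K (T ω) :=
    hsum.of_add_posSemidef hKZK hgg
      (((continuous_id.matrix_transpose.matrix_mul continuous_const).matrix_mul
        continuous_id).measurable.comp hK |>.comp_aemeasurable hT)
  have hggi : MatrixIntegrable fun ω => (g (T ω))ᵀ * g (T ω) :=
    (by simpa only [add_comm] using hsum : MatrixIntegrable fun ω => _ + _).of_add_posSemidef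
      hgg hKZK ((continuous_id.matrix_transpose.matrix_mul
        continuous_id).measurable.comp hg |>.comp_aemeasurable hT)
  exact ⟨hKZKi, hggi, by rw [hsplit, mExp_add hKZKi hggi]⟩

end ProbabilityTheory

section GradientStep

variable {Ω : Type*} [MeasureSpace Ω] [IsProbabilityMeasure (volume : Measure Ω)] {n p : ℕ}
  {U : Ω → Matrix (Fin p) (Fin n) ℝ} {A : Ω → Matrix (Fin n) (Fin n) ℝ}
  {B : Ω → Matrix (Fin p) (Fin n) ℝ}

/-- Conditionally on `(A, B)`, the second moment of `U A - B` is
`Aᵀ (Cov U) A + (E[U] A - B)ᵀ (E[U] A - B)`. -/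
theorem matrixIntegrable_meanGradient_sq (hind : IndepFun U (fun ω => (A ω, B ω)) volume)
    (hU : MatrixIntegrable U) (hUU : MatrixIntegrable fun ω => (U ω)ᵀ * U ω)
    (hA : AEMeasurable A) (hB : AEMeasurable B)
    (hFF : MatrixIntegrable fun ω => (U ω * A ω - B ω)ᵀ * (U ω * A ω - B ω)) :
    MatrixIntegrable fun ω => (mExp U * A ω - B ω)ᵀ * (mExp U * A ω - B ω) := by
  have hgrad : ∀ ω, (U ω - mExp U) * A ω - (B ω - mExp U * A ω) = U ω * A ω - B ω :=
    fun ω => by rw [Matrix.sub_mul]; abel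
  have hneg : ∀ ω, (mExp U * A ω - B ω)ᵀ * (mExp U * A ω - B ω) =
      (B ω - mExp U * A ω)ᵀ * (B ω - mExp U * A ω) := fun ω => by
    rw [← neg_sub (B ω), transpose_neg, Matrix.neg_mul, Matrix.mul_neg, neg_neg]
  simp only [hneg]
  exact (hind.mExp_centered_affine_sq (hA.prodMk hB) hU hUU (K := Prod.fst)
    (g := fun z => z.2 - mExp U * z.1) measurable_fst
    (Continuous.measurable (by fun_prop)) (by simpa only [hgrad] using hFF)).2.1

theorem mCov_gradientStep (hind : IndepFun U (fun ω => (A ω, B ω)) volume)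
    (hAsymm : ∀ ω, (A ω)ᵀ = A ω) (hU : MatrixIntegrable U)
    (hUU : MatrixIntegrable fun ω => (U ω)ᵀ * U ω) (hA : MatrixIntegrable A)
    (hB : MatrixIntegrable B) (hUF : MatrixIntegrable fun ω => (U ω)ᵀ * (U ω * A ω - B ω))
    (hFF : MatrixIntegrable fun ω => (U ω * A ω - B ω)ᵀ * (U ω * A ω - B ω)) (c : ℝ) :
    mCov (fun ω => U ω - c • (U ω * A ω - B ω)) =
      mExp (fun ω => (1 - c • A ω) * mCov U * (1 - c • A ω)) +
        c ^ 2 • mCov fun ω => mExp U * A ω - B ω := by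
  have hindA : IndepFun U A volume := hind.comp measurable_id measurable_fst
  obtain ⟨hUA, hUAmean⟩ := hindA.matrixIntegrable_mul_and_mExp_mul hU hA
  have hF : MatrixIntegrable fun ω => U ω * A ω - B ω := hUA.sub hB
  have hstep : MatrixIntegrable fun ω => U ω - c • (U ω * A ω - B ω) := hU.sub (hF.smul c)
  have hstep_sq := hUU.transpose_mul_self_sub_smul hUF hFF c
  have hmean : mExp (fun ω => U ω - c • (U ω * A ω - B ω)) =
      mExp U - c • mExp fun ω => mExp U * A ω - B ω := by
    rw [mExp_sub hU (hF.smul c), mExp_smul, mExp_sub hUA hB, hUAmean,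
      mExp_sub (hA.const_mul _) hB, mExp_const_mul hA]
  have hcentered : ∀ ω, U ω - c • (U ω * A ω - B ω) -
      mExp (fun ω => U ω - c • (U ω * A ω - B ω)) = (U ω - mExp U) * (1 - c • A ω) -
        c • (mExp U * A ω - B ω - mExp fun ω => mExp U * A ω - B ω) := fun ω => by
    rw [hmean]
    simp only [Matrix.sub_mul, Matrix.mul_sub, Matrix.mul_one, Matrix.mul_smul, smul_sub]
    abel
  have hcentered_int := (hstep.transpose_mul_self_sub_iff
    (mExp fun ω => U ω - c • (U ω * A ω - B ω))).2 hstep_sq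
  simp only [hcentered] at hcentered_int
  obtain ⟨-, -, hsplit⟩ := hind.mExp_centered_affine_sq
    (hA.aemeasurable.prodMk hB.aemeasurable) hU hUU (K := fun z => 1 - c • z.1)
    (g := fun z => c • (mExp U * z.1 - z.2 - mExp fun ω => mExp U * A ω - B ω))
    (Continuous.measurable (by fun_prop)) (Continuous.measurable (by fun_prop))
    hcentered_int
  rw [mCov]
  simp only [hcentered]
  rw [hsplit]
  congr 1
  · simp only [transpose_sub, transpose_one, transpose_smul, hAsymm]
  · simp only [transpose_smul, Matrix.smul_mul, Matrix.mul_smul, smul_smul, ← sq]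
    exact mExp_smul _

end GradientStep

theorem stmt_13_general {Ω : Type*} [MeasureSpace Ω] [IsProbabilityMeasure (volume : Measure Ω)]
    {n p : ℕ} (N : ℕ) (Nd : ℕ → ℕ) (η : ℕ → ℝ)
    (W : ℕ → Ω → Matrix (Fin p) (Fin n) ℝ)
    (X : (t : ℕ) → Ω → Matrix (Fin n) (Fin (Nd t)) ℝ)
    (Y : (t : ℕ) → Ω → Matrix (Fin p) (Fin (Nd t)) ℝ)
    (hdyn : ∀ t ω, W (t + 1) ω =
      W t ω - ((2 * η t) / (N : ℝ)) • ((W t ω * X t ω - Y t ω) * (X t ω)ᵀ))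
    (hindep : ∀ t, IndepFun (W t) (fun ω => (X t ω, Y t ω)) volume)
    -- integrability of all relevant entries
    (hintW : ∀ t i j, Integrable (fun ω => W t ω i j))
    (hintWW : ∀ t i j, Integrable (fun ω => ((W t ω)ᵀ * W t ω) i j))
    (hintXX : ∀ t i j, Integrable (fun ω => (X t ω * (X t ω)ᵀ) i j))
    (hintYX : ∀ t i j, Integrable (fun ω => (Y t ω * (X t ω)ᵀ) i j))
    (hintWG : ∀ t i j, Integrable
      (fun ω => ((W t ω)ᵀ * ((W t ω * X t ω - Y t ω) * (X t ω)ᵀ)) i j))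
    (hintGG : ∀ t i j, Integrable
      (fun ω => (((W t ω * X t ω - Y t ω) * (X t ω)ᵀ)ᵀ *
        ((W t ω * X t ω - Y t ω) * (X t ω)ᵀ)) i j))
    -- the stochastic gradient estimate at `E[W_t]`
    (G : (t : ℕ) → Ω → Matrix (Fin p) (Fin n) ℝ)
    (hG : ∀ t ω, G t ω = (mExp (W t) * X t ω - Y t ω) * (X t ω)ᵀ)
    -- the centered second moment
    (Z : ℕ → Matrix (Fin n) (Fin n) ℝ)
    (hZ : ∀ t, Z t = mExp (fun ω => (W t ω - mExp (W t))ᵀ * (W t ω - mExp (W t))))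
    -- `V_t = (4η_t²/N²) ⬝ (Id ∘ Var(G_t))`
    (V : ℕ → Matrix (Fin n) (Fin n) ℝ)
    (hV : ∀ t, V t = (4 * (η t) ^ 2 / (N : ℝ) ^ 2) •
      (mExp (fun ω => (G t ω)ᵀ * G t ω) - (mExp (G t))ᵀ * mExp (G t))) :
    ∀ t, Z (t + 1) =
        mExp (fun ω =>
          (1 - ((2 * η t) / (N : ℝ)) • (X t ω * (X t ω)ᵀ)) * Z t *
            (1 - ((2 * η t) / (N : ℝ)) • (X t ω * (X t ω)ᵀ))) + V t
      ∧ (V t).trace =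
          (4 * (η t) ^ 2 / (N : ℝ) ^ 2) * ∫ ω, (frobNorm (G t ω - mExp (G t))) ^ 2 := by
  intro t
  set c := 2 * η t / (N : ℝ)
  have hgrad : ∀ ω, (W t ω * X t ω - Y t ω) * (X t ω)ᵀ =
      W t ω * (X t ω * (X t ω)ᵀ) - Y t ω * (X t ω)ᵀ := fun ω => by
    rw [Matrix.sub_mul, Matrix.mul_assoc]
  have hXX : MatrixIntegrable fun ω => X t ω * (X t ω)ᵀ := hintXX t
  have hYX : MatrixIntegrable fun ω => Y t ω * (X t ω)ᵀ := hintYX t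
  have hWF : MatrixIntegrable fun ω =>
      (W t ω)ᵀ * (W t ω * (X t ω * (X t ω)ᵀ) - Y t ω * (X t ω)ᵀ) := by
    simpa only [MatrixIntegrable, hgrad] using hintWG t
  have hFF : MatrixIntegrable fun ω => (W t ω * (X t ω * (X t ω)ᵀ) - Y t ω * (X t ω)ᵀ)ᵀ *
      (W t ω * (X t ω * (X t ω)ᵀ) - Y t ω * (X t ω)ᵀ) := by
    simpa only [MatrixIntegrable, hgrad] using hintGG t
  have hind : IndepFun (W t) (fun ω => (X t ω * (X t ω)ᵀ, Y t ω * (X t ω)ᵀ)) volume :=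
    (hindep t).comp (ψ := fun z : Matrix (Fin n) (Fin (Nd t)) ℝ × Matrix (Fin p) (Fin (Nd t)) ℝ =>
      (z.1 * z.1ᵀ, z.2 * z.1ᵀ)) measurable_id (Continuous.measurable (by fun_prop))
  have hG' : G t = fun ω => mExp (W t) * (X t ω * (X t ω)ᵀ) - Y t ω * (X t ω)ᵀ :=
    funext fun ω => by rw [hG, Matrix.sub_mul, Matrix.mul_assoc]
  have hGi : MatrixIntegrable (G t) := hG' ▸ (hXX.const_mul _).sub hYX
  have hGG : MatrixIntegrable fun ω => (G t ω)ᵀ * G t ω := hG' ▸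
    matrixIntegrable_meanGradient_sq hind (hintW t) (hintWW t) hXX.aemeasurable
      hYX.aemeasurable hFF
  have hVt : V t = c ^ 2 • mCov (G t) := by
    rw [hV, mCov_eq_sub hGi hGG, div_pow, mul_pow]
    norm_num
  refine ⟨?_, ?_⟩
  · rw [hVt, hZ, hZ, funext (hdyn t), hG']
    simp only [hgrad]
    exact mCov_gradientStep hind (fun ω => by rw [transpose_mul, transpose_transpose])
      (hintW t) (hintWW t) hXX hYX hWF hFF c
  · rw [hVt, trace_smul, trace_mCov hGi hGG, smul_eq_mul]
    norm_num [c, div_pow, mul_pow]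

/-- The second-moment recursion for augmented gradient descent: with
`Z_t = E[(W_t − E W_t)ᵀ(W_t − E W_t)]` and stochastic gradient estimate
`G_t = (E[W_t] X_t − Y_t) X_tᵀ`,
`Z_{t+1} = E[(Id − (2η_t/N) X_tX_tᵀ) Z_t (Id − (2η_t/N) X_tX_tᵀ)] + V_t` where
`V_t = (4η_t²/N²)(E[G_tᵀ G_t] − (E G_t)ᵀ (E G_t))`, whose trace is
`(4η_t²/N²) E[‖G_t − E G_t‖_F²]`. -/
theorem stmt_13 {Ω : Type*} [MeasureSpace Ω] [IsProbabilityMeasure (volume : Measure Ω)]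
    {n p : ℕ} (N : ℕ) (hN : 1 ≤ N) (Nd : ℕ → ℕ) (η : ℕ → ℝ) (hη : ∀ t, 0 < η t)
    (W : ℕ → Ω → Matrix (Fin p) (Fin n) ℝ)
    (X : (t : ℕ) → Ω → Matrix (Fin n) (Fin (Nd t)) ℝ)
    (Y : (t : ℕ) → Ω → Matrix (Fin p) (Fin (Nd t)) ℝ)
    (hdyn : ∀ t ω, W (t + 1) ω =
      W t ω - ((2 * η t) / (N : ℝ)) • ((W t ω * X t ω - Y t ω) * (X t ω)ᵀ))
    (hindep : ∀ t, IndepFun (W t) (fun ω => (X t ω, Y t ω)) volume)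
    -- integrability of all relevant entries
    (hintW : ∀ t i j, Integrable (fun ω => W t ω i j))
    (hintWW : ∀ t i j, Integrable (fun ω => ((W t ω)ᵀ * W t ω) i j))
    (hintXX : ∀ t i j, Integrable (fun ω => (X t ω * (X t ω)ᵀ) i j))
    (hintYX : ∀ t i j, Integrable (fun ω => (Y t ω * (X t ω)ᵀ) i j))
    (hintWXX : ∀ t i j, Integrable (fun ω => (W t ω * X t ω * (X t ω)ᵀ) i j))
    (hintWG : ∀ t i j, Integrable
      (fun ω => ((W t ω)ᵀ * ((W t ω * X t ω - Y t ω) * (X t ω)ᵀ)) i j))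
    (hintGG : ∀ t i j, Integrable
      (fun ω => (((W t ω * X t ω - Y t ω) * (X t ω)ᵀ)ᵀ *
        ((W t ω * X t ω - Y t ω) * (X t ω)ᵀ)) i j))
    -- the stochastic gradient estimate at `E[W_t]`
    (G : (t : ℕ) → Ω → Matrix (Fin p) (Fin n) ℝ)
    (hG : ∀ t ω, G t ω = (mExp (W t) * X t ω - Y t ω) * (X t ω)ᵀ)
    -- the centered second moment
    (Z : ℕ → Matrix (Fin n) (Fin n) ℝ)
    (hZ : ∀ t, Z t = mExp (fun ω => (W t ω - mExp (W t))ᵀ * (W t ω - mExp (W t))))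
    -- `V_t = (4η_t²/N²) ⬝ (Id ∘ Var(G_t))`
    (V : ℕ → Matrix (Fin n) (Fin n) ℝ)
    (hV : ∀ t, V t = (4 * (η t) ^ 2 / (N : ℝ) ^ 2) •
      (mExp (fun ω => (G t ω)ᵀ * G t ω) - (mExp (G t))ᵀ * mExp (G t))) :
    ∀ t, Z (t + 1) =
        mExp (fun ω =>
          (1 - ((2 * η t) / (N : ℝ)) • (X t ω * (X t ω)ᵀ)) * Z t *
            (1 - ((2 * η t) / (N : ℝ)) • (X t ω * (X t ω)ᵀ))) + V t
      ∧ (V t).trace =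
          (4 * (η t) ^ 2 / (N : ℝ) ^ 2) * ∫ ω, (frobNorm (G t ω - mExp (G t))) ^ 2 :=
  stmt_13_general N Nd η W X Y hdyn hindep hintW hintWW hintXX hintYX hintWG hintGG G hG Z hZ V hV
end
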